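/- arXiv:2102.06818 — 2 statements merged into one kernel-verified Lean document; each statement's English description precedes it below -/
import Mathlib

section
/- Let A be a real symmetric matrix, λ an eigenvalue of A with unit eigenvector u, and let v be a unit vector with ⟨v, u⟩ ≠ 0. Writing μ = ⟨Av, v⟩, one has |μ − λ| ≤ ‖A − λI‖ · sin²∠(v, u) · C for C = 2‖A‖/|⟨v,u⟩|²; more simply: |μ − λ| ≤ 2‖A‖ sin²∠(v,u) when sin∠(v,u) ≤ 1/√2, i.e., the Rayleigh quotient error is quadratic in the eigenvector angle error. -/
/-!
`S = A - λ I` is symmetric and kills `u`, so the Rayleigh quotient error `⟨S v, v⟩` is unchanged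
when `v` is replaced by its component `w = v - ⟨v, u⟩ u` orthogonal to `u`. Hence
`|μ - λ| ≤ ‖S‖ ‖w‖² = ‖A - λ I‖ sin²∠(v, u)`, and `‖A - λ I‖ ≤ 2 ‖A‖` because `|λ| ≤ ‖A‖`.
-/

open Matrix

/-- Euclidean norm on `ℝⁿ`. -/
noncomputable def euclidNorm {n : ℕ} (v : Fin n → ℝ) : ℝ :=
  Real.sqrt (v ⬝ᵥ v)

/-- Operator norm induced by the Euclidean norm. -/
noncomputable def eOpNorm {n : ℕ} (T : Matrix (Fin n) (Fin n) ℝ) : ℝ :=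
  sSup {r : ℝ | ∃ v : Fin n → ℝ, euclidNorm v = 1 ∧ r = euclidNorm (T *ᵥ v)}

open scoped RealInnerProductSpace

namespace LinearMap.IsSymmetric

variable {𝕜 E : Type*} [RCLike 𝕜] [NormedAddCommGroup E] [InnerProductSpace 𝕜 E]

theorem inner_map_sub_smul_of_map_eq_zero {S : E →ₗ[𝕜] E} (hS : S.IsSymmetric) {u : E}
    (hu : S u = 0) (v : E) (c : 𝕜) :
    inner 𝕜 (S (v - c • u)) (v - c • u) = inner 𝕜 (S v) v := by
  rw [map_sub, map_smul, hu, smul_zero, sub_zero, inner_sub_right, inner_smul_right, hS v u, hu,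
    inner_zero_right, mul_zero, sub_zero]

end LinearMap.IsSymmetric

section RayleighQuotient

variable {E : Type*} [NormedAddCommGroup E] [InnerProductSpace ℝ E]

theorem norm_sub_inner_smul_sq_of_norm_eq_one {u v : E} (hu : ‖u‖ = 1) (hv : ‖v‖ = 1) :
    ‖v - ⟪v, u⟫ • u‖ ^ 2 = 1 - ⟪v, u⟫ ^ 2 := by
  rw [norm_sub_sq_real, norm_smul, inner_smul_right, hu, hv, Real.norm_eq_abs,
    mul_pow, sq_abs]
  ring

theorem abs_le_opNorm_of_apply_eq_smul {T : E →L[ℝ] E} {lam : ℝ} {u : E} (hu : T u = lam • u)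
    (hu1 : ‖u‖ = 1) : |lam| ≤ ‖T‖ := by
  simpa [hu, norm_smul, hu1] using T.le_opNorm u

theorem abs_inner_map_self_sub_eigenvalue_le {T : E →L[ℝ] E} (hT : (T : E →ₗ[ℝ] E).IsSymmetric)
    {lam : ℝ} {u v : E} (hu : T u = lam • u) (hu1 : ‖u‖ = 1) (hv1 : ‖v‖ = 1) :
    |⟪T v, v⟫ - lam| ≤ ‖T - lam • ContinuousLinearMap.id ℝ E‖ * (1 - ⟪v, u⟫ ^ 2) := by
  set S := T - lam • ContinuousLinearMap.id ℝ E
  have hS : (S : E →ₗ[ℝ] E).IsSymmetric := hT.sub (LinearMap.IsSymmetric.id.smul (by simp))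
  have hSu : S u = 0 := by simp [S, hu]
  set w := v - ⟪v, u⟫ • u
  have hSw : ⟪S w, w⟫ = ⟪T v, v⟫ - lam := by
    rw [← ContinuousLinearMap.coe_coe, hS.inner_map_sub_smul_of_map_eq_zero hSu]
    simp [S, inner_sub_left, real_inner_smul_left, hv1]
  calc |⟪T v, v⟫ - lam| = |⟪S w, w⟫| := by rw [hSw]
    _ ≤ ‖S w‖ * ‖w‖ := abs_real_inner_le_norm _ _
    _ ≤ ‖S‖ * ‖w‖ * ‖w‖ := by gcongr; exact S.le_opNorm w
    _ = ‖S‖ * (1 - ⟪v, u⟫ ^ 2) := by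
      rw [mul_assoc, ← sq, norm_sub_inner_smul_sq_of_norm_eq_one hu1 hv1]

theorem abs_inner_map_self_sub_eigenvalue_le_two_mul {T : E →L[ℝ] E}
    (hT : (T : E →ₗ[ℝ] E).IsSymmetric) {lam : ℝ} {u v : E} (hu : T u = lam • u) (hu1 : ‖u‖ = 1)
    (hv1 : ‖v‖ = 1) : |⟪T v, v⟫ - lam| ≤ 2 * ‖T‖ * (1 - ⟪v, u⟫ ^ 2) := by
  have hlam := abs_le_opNorm_of_apply_eq_smul hu hu1
  have hshift : ‖T - lam • ContinuousLinearMap.id ℝ E‖ ≤ 2 * ‖T‖ := calc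
    ‖T - lam • ContinuousLinearMap.id ℝ E‖ ≤ ‖T‖ + |lam| * ‖ContinuousLinearMap.id ℝ E‖ := by
      grw [norm_sub_le, norm_smul, Real.norm_eq_abs]
    _ ≤ ‖T‖ + ‖T‖ * 1 := by grw [hlam, ContinuousLinearMap.norm_id_le]
    _ = 2 * ‖T‖ := by ring
  have hcos : ⟪v, u⟫ ^ 2 ≤ 1 := by
    rw [sq_le_one_iff_abs_le_one]
    simpa [hu1, hv1] using abs_real_inner_le_norm v u
  grw [abs_inner_map_self_sub_eigenvalue_le hT hu hu1 hv1, hshift]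
  linarith

end RayleighQuotient

section EuclideanBridge

variable {n : ℕ}

theorem euclidNorm_eq_norm_toLp (x : Fin n → ℝ) : euclidNorm x = ‖WithLp.toLp 2 x‖ := by
  rw [EuclideanSpace.norm_eq, euclidNorm]
  simp [dotProduct, sq]

theorem dotProduct_eq_inner_toLp (x y : Fin n → ℝ) :
    x ⬝ᵥ y = ⟪WithLp.toLp 2 x, WithLp.toLp 2 y⟫ := by
  simp [EuclideanSpace.inner_toLp_toLp, dotProduct_comm]

theorem eOpNorm_eq_norm_toEuclideanCLM (A : Matrix (Fin n) (Fin n) ℝ) :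
    eOpNorm A = ‖toEuclideanCLM (𝕜 := ℝ) A‖ := by
  rw [← ContinuousLinearMap.sSup_sphere_eq_norm, eOpNorm]
  congr 1
  ext r
  simp only [Set.mem_ofPred_eq, Set.mem_image, mem_sphere_iff_norm, sub_zero]
  constructor
  · rintro ⟨x, hx, rfl⟩
    exact ⟨WithLp.toLp 2 x, by rwa [← euclidNorm_eq_norm_toLp], by
      simp [euclidNorm_eq_norm_toLp]⟩
  · rintro ⟨x, hx, rfl⟩
    exact ⟨WithLp.ofLp x, by rwa [euclidNorm_eq_norm_toLp], by
      rw [euclidNorm_eq_norm_toLp, ← toEuclideanCLM_toLp, WithLp.toLp_ofLp]⟩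

end EuclideanBridge

theorem rayleigh_quotient_quadratic_accuracy_general
    {n : ℕ} (A : Matrix (Fin n) (Fin n) ℝ) (hA : A.IsHermitian)
    (lam : ℝ) (u : Fin n → ℝ) (hu : A *ᵥ u = lam • u) (hunorm : euclidNorm u = 1)
    (v : Fin n → ℝ) (hvnorm : euclidNorm v = 1)
    (μ : ℝ) (hμ : μ = A *ᵥ v ⬝ᵥ v) :
    |μ - lam| ≤ 2 * eOpNorm A * (1 - (v ⬝ᵥ u) ^ 2) := by
  set T := toEuclideanCLM (n := Fin n) (𝕜 := ℝ) A
  have hT : (T : EuclideanSpace ℝ (Fin n) →ₗ[ℝ] _).IsSymmetric :=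
    isSymmetric_toEuclideanLin_iff.mpr hA
  have hTu : T (WithLp.toLp 2 u) = lam • WithLp.toLp 2 u := by
    rw [toEuclideanCLM_toLp, hu, WithLp.toLp_smul]
  rw [euclidNorm_eq_norm_toLp] at hunorm hvnorm
  rw [hμ, eOpNorm_eq_norm_toEuclideanCLM, dotProduct_eq_inner_toLp, dotProduct_eq_inner_toLp,
    ← toEuclideanCLM_toLp]
  exact abs_inner_map_self_sub_eigenvalue_le_two_mul hT hTu hunorm hvnorm

theorem rayleigh_quotient_quadratic_accuracy
    {n : ℕ} (A : Matrix (Fin n) (Fin n) ℝ) (hA : A.IsHermitian)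
    (lam : ℝ) (u : Fin n → ℝ) (hu : A *ᵥ u = lam • u) (hunorm : euclidNorm u = 1)
    (v : Fin n → ℝ) (hvnorm : euclidNorm v = 1) (hvu : v ⬝ᵥ u ≠ 0)
    (μ : ℝ) (hμ : μ = A *ᵥ v ⬝ᵥ v)
    (hsin : 1 - (v ⬝ᵥ u) ^ 2 ≤ 1 / 2) :
    |μ - lam| ≤ 2 * eOpNorm A * (1 - (v ⬝ᵥ u) ^ 2) :=
  rayleigh_quotient_quadratic_accuracy_general A hA lam u hu hunorm v hvnorm μ hμ
end

section
/- Let (μⁿ) be the sequence of Rayleigh quotients generated by inverse iteration vⁿ⁺¹ = A⁻¹vⁿ / ‖A⁻¹vⁿ‖ for a symmetric positive definite matrix A, with μⁿ = ⟨Avⁿ, vⁿ⟩. Then the sequence (μⁿ) is non-increasing and bounded below by the smallest eigenvalue λ₁ of A, hence convergent. -/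
open Matrix Filter

/-- Euclidean norm on `ℝⁿ`. -/
noncomputable def enorm' {n : ℕ} (v : Fin n → ℝ) : ℝ :=
  Real.sqrt (v ⬝ᵥ v)

/-!
For a unit vector `v` put `u = A⁻¹ v`; the next Rayleigh quotient is `⟨v, u⟩ / ⟨u, u⟩`. Cauchy–Schwarz
for the Euclidean inner product gives `⟨v, u⟩² ≤ ⟨u, u⟩`, and Cauchy–Schwarz for the form `⟨A ·, ·⟩`
gives `1 = ⟨A u, v⟩² ≤ ⟨A u, u⟩ ⟨A v, v⟩ = ⟨v, u⟩ μ`. Hence `⟨v, u⟩ ≤ ⟨v, u⟩² μ ≤ ⟨u, u⟩ μ`, i.e. the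
Rayleigh quotient does not increase. It is bounded below by `λ₁` because `A - λ₁ I` is positive
semidefinite, so it converges.
-/

namespace Matrix

variable {ι : Type*} [Fintype ι] {A : Matrix ι ι ℝ}

theorem IsHermitian.dotProduct_mulVec_comm (hA : A.IsHermitian) (x y : ι → ℝ) :
    x ⬝ᵥ A *ᵥ y = y ⬝ᵥ A *ᵥ x := by
  rw [dotProduct_comm, ← vecMul_transpose, ← dotProduct_mulVec,
    ← conjTranspose_eq_transpose_of_trivial, hA.eq]

variable [DecidableEq ι]

theorem PosSemidef.dotProduct_mulVec_sq_le (hA : A.PosSemidef) (x y : ι → ℝ) :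
    (x ⬝ᵥ A *ᵥ y) ^ 2 ≤ (x ⬝ᵥ A *ᵥ x) * (y ⬝ᵥ A *ᵥ y) := by
  simpa only [toLinearMap₂'_apply'] using
    LinearMap.BilinForm.apply_sq_le_of_symm (toLinearMap₂' ℝ A)
      (fun x => by simpa only [toLinearMap₂'_apply', star_trivial] using
        hA.dotProduct_mulVec_nonneg x)
      ⟨fun x y => by simpa only [toLinearMap₂'_apply', RingHom.id_apply] using
        hA.1.dotProduct_mulVec_comm x y⟩ x y

theorem IsHermitian.posSemidef_sub_iInf_eigenvalues_smul_one (hA : A.IsHermitian) :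
    (A - (⨅ i, hA.eigenvalues i) • 1).PosSemidef := by
  rw [posSemidef_iff_isHermitian_and_spectrum_nonneg]
  refine ⟨hA.sub (isHermitian_one.smul (.all _)), ?_⟩
  rw [← Algebra.algebraMap_eq_smul_one, ← spectrum.sub_singleton_eq,
    hA.spectrum_real_eq_range_eigenvalues]
  rintro _ ⟨_, ⟨i, rfl⟩, _, rfl, rfl⟩
  exact sub_nonneg.mpr (ciInf_le (Set.finite_range hA.eigenvalues).bddBelow i)

theorem IsHermitian.iInf_eigenvalues_mul_le (hA : A.IsHermitian) (x : ι → ℝ) :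
    (⨅ i, hA.eigenvalues i) * (x ⬝ᵥ x) ≤ A *ᵥ x ⬝ᵥ x := by
  have := hA.posSemidef_sub_iInf_eigenvalues_smul_one.dotProduct_mulVec_nonneg x
  simp only [star_trivial, sub_mulVec, smul_mulVec, one_mulVec, dotProduct_sub,
    dotProduct_smul, smul_eq_mul, sub_nonneg] at this
  rwa [dotProduct_comm (A *ᵥ x)]

theorem PosSemidef.mulVec_dotProduct_le_of_mulVec_eq (hA : A.PosSemidef) {u v : ι → ℝ}
    (huv : A *ᵥ u = v) (hv : v ⬝ᵥ v = 1) :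
    A *ᵥ u ⬝ᵥ u ≤ (A *ᵥ v ⬝ᵥ v) * (u ⬝ᵥ u) := by
  rw [huv, dotProduct_comm (A *ᵥ v)]
  have hα : 0 ≤ v ⬝ᵥ u := by
    simpa [huv, dotProduct_comm u v] using hA.dotProduct_mulVec_nonneg u
  have hμ : 0 ≤ v ⬝ᵥ A *ᵥ v := by simpa using hA.dotProduct_mulVec_nonneg v
  have hα_sq : (v ⬝ᵥ u) ^ 2 ≤ u ⬝ᵥ u := by
    simpa [hv] using PosSemidef.one.dotProduct_mulVec_sq_le v u
  have hαμ : 1 ≤ (v ⬝ᵥ u) * (v ⬝ᵥ A *ᵥ v) := by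
    have h := hA.dotProduct_mulVec_sq_le u v
    rwa [hA.1.dotProduct_mulVec_comm u v, huv, hv, one_pow, dotProduct_comm u v] at h
  calc v ⬝ᵥ u ≤ (v ⬝ᵥ u) * ((v ⬝ᵥ u) * (v ⬝ᵥ A *ᵥ v)) := le_mul_of_one_le_right hα hαμ
    _ = (v ⬝ᵥ A *ᵥ v) * (v ⬝ᵥ u) ^ 2 := by ring
    _ ≤ (v ⬝ᵥ A *ᵥ v) * (u ⬝ᵥ u) := mul_le_mul_of_nonneg_left hα_sq hμ

end Matrix

theorem mul_self_enorm' {n : ℕ} (x : Fin n → ℝ) : enorm' x * enorm' x = x ⬝ᵥ x :=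
  Real.mul_self_sqrt (dotProduct_self_star_nonneg x)

theorem mulVec_smul_inv_enorm'_dotProduct {n : ℕ} (A : Matrix (Fin n) (Fin n) ℝ) (x : Fin n → ℝ) :
    A *ᵥ ((enorm' x)⁻¹ • x) ⬝ᵥ ((enorm' x)⁻¹ • x) = (A *ᵥ x ⬝ᵥ x) / (x ⬝ᵥ x) := by
  rw [mulVec_smul, smul_dotProduct, dotProduct_smul, smul_eq_mul, smul_eq_mul, ← mul_assoc,
    ← mul_inv, mul_self_enorm', inv_mul_eq_div]

theorem smul_inv_enorm'_dotProduct_self {n : ℕ} {x : Fin n → ℝ} (hx : x ≠ 0) :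
    ((enorm' x)⁻¹ • x) ⬝ᵥ ((enorm' x)⁻¹ • x) = 1 := by
  simpa [div_self (dotProduct_self_eq_zero.not.mpr hx)] using
    mulVec_smul_inv_enorm'_dotProduct 1 x

theorem inverse_iteration_rayleigh_monotone_convergent_general
    {n : ℕ} (A : Matrix (Fin n) (Fin n) ℝ) (hA : A.PosDef)
    (v : ℕ → (Fin n → ℝ)) (hv0 : enorm' (v 0) = 1)
    (hrec : ∀ k : ℕ, v (k + 1) = (enorm' (A⁻¹ *ᵥ v k))⁻¹ • (A⁻¹ *ᵥ v k))
    (μ : ℕ → ℝ) (hμ : ∀ k, μ k = A *ᵥ v k ⬝ᵥ v k)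
    (lam1 : ℝ) (hlam1 : lam1 = ⨅ i, hA.1.eigenvalues i) :
    (∀ k : ℕ, μ (k + 1) ≤ μ k) ∧ (∀ k : ℕ, lam1 ≤ μ k) ∧
      ∃ L : ℝ, Tendsto μ atTop (nhds L) := by
  have hAinv (x : Fin n → ℝ) : A *ᵥ (A⁻¹ *ᵥ x) = x := by
    rw [mulVec_mulVec, mul_nonsing_inv A hA.det_pos.ne'.isUnit, one_mulVec]
  have hAinv_ne {x : Fin n → ℝ} (hx : x ⬝ᵥ x = 1) : A⁻¹ *ᵥ x ≠ 0 := fun h0 => by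
    rw [← hAinv x, h0, mulVec_zero, zero_dotProduct] at hx
    exact zero_ne_one hx
  have hunit (k : ℕ) : v k ⬝ᵥ v k = 1 := by
    induction k with
    | zero => rw [← mul_self_enorm', hv0, one_mul]
    | succ k ih => rw [hrec k, smul_inv_enorm'_dotProduct_self (hAinv_ne ih)]
  have hmono (k : ℕ) : μ (k + 1) ≤ μ k := by
    rw [hμ, hμ, hrec, mulVec_smul_inv_enorm'_dotProduct,
      div_le_iff₀ (by simpa using dotProduct_self_star_pos_iff.mpr (hAinv_ne (hunit k)))]
    exact hA.posSemidef.mulVec_dotProduct_le_of_mulVec_eq (hAinv _) (hunit k)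
  have hlb (k : ℕ) : lam1 ≤ μ k := by
    simpa [hlam1, hμ, hunit k] using hA.1.iInf_eigenvalues_mul_le (v k)
  exact ⟨hmono, hlb, _, tendsto_atTop_ciInf (antitone_nat_of_succ_le hmono) ⟨lam1, by
    rintro _ ⟨k, rfl⟩; exact hlb k⟩⟩

theorem inverse_iteration_rayleigh_monotone_convergent
    {n : ℕ} (hn : 0 < n) (A : Matrix (Fin n) (Fin n) ℝ) (hA : A.PosDef)
    (v : ℕ → (Fin n → ℝ)) (hv0 : enorm' (v 0) = 1)
    (hrec : ∀ k : ℕ, v (k + 1) = (enorm' (A⁻¹ *ᵥ v k))⁻¹ • (A⁻¹ *ᵥ v k))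
    (μ : ℕ → ℝ) (hμ : ∀ k, μ k = A *ᵥ v k ⬝ᵥ v k)
    (lam1 : ℝ) (hlam1 : lam1 = ⨅ i, hA.1.eigenvalues i) :
    (∀ k : ℕ, μ (k + 1) ≤ μ k) ∧ (∀ k : ℕ, lam1 ≤ μ k) ∧
      ∃ L : ℝ, Tendsto μ atTop (nhds L) :=
  inverse_iteration_rayleigh_monotone_convergent_general A hA v hv0 hrec μ hμ lam1 hlam1
end
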